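/- arXiv:2411.02289 — 2 statements merged into one kernel-verified Lean document; each statement's English description precedes it below -/
import Mathlib

section
/- With W(x,y,z) = exp(i·x·σ_x⊗σ_x)·exp(i·y·σ_y⊗σ_y)·exp(i·z·σ_z⊗σ_z), one has W(π/4, π/4, π/4) = e^{iπ/4}·S, where S is the SWAP matrix on ℂ²⊗ℂ². Consequently, Tr_p[W(π/4,π/4,π/4)·(ρ ⊗ ξ)·W(π/4,π/4,π/4)ᴴ] = Tr(ρ)·ξ for all 2×2 complex matrices ρ and ξ; in particular for density matrices the output is the program state ξ, exactly as for the SWAP processor. -/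
open Matrix Kronecker Complex

/-- The Pauli matrix σ_x. -/
noncomputable def pauliX : Matrix (Fin 2) (Fin 2) ℂ := !![0, 1; 1, 0]

/-- The Pauli matrix σ_y. -/
noncomputable def pauliY : Matrix (Fin 2) (Fin 2) ℂ := !![0, -I; I, 0]

/-- The Pauli matrix σ_z. -/
noncomputable def pauliZ : Matrix (Fin 2) (Fin 2) ℂ := !![1, 0; 0, -1]

/-- The two-qubit interaction unitary
`W(x,y,z) = exp(i x σ_x⊗σ_x) exp(i y σ_y⊗σ_y) exp(i z σ_z⊗σ_z)`. -/
noncomputable def Wgate (x y z : ℝ) : Matrix (Fin 2 × Fin 2) (Fin 2 × Fin 2) ℂ :=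
  NormedSpace.exp (((x : ℂ) * I) • (pauliX ⊗ₖ pauliX)) *
  NormedSpace.exp (((y : ℂ) * I) • (pauliY ⊗ₖ pauliY)) *
  NormedSpace.exp (((z : ℂ) * I) • (pauliZ ⊗ₖ pauliZ))

/-- The 4×4 matrix unit `|a b⟩⟨c d|` on ℂ²⊗ℂ². -/
noncomputable def E2 (a b c d : Fin 2) : Matrix (Fin 2 × Fin 2) (Fin 2 × Fin 2) ℂ :=
  single (a, b) (c, d) (1 : ℂ)

/-- The SWAP matrix on ℂ²⊗ℂ². -/
noncomputable def swapMatrix : Matrix (Fin 2 × Fin 2) (Fin 2 × Fin 2) ℂ :=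
  E2 0 0 0 0 + E2 0 1 1 0 + E2 1 0 0 1 + E2 1 1 1 1

/-- Partial trace over the program (second) tensor factor. -/
noncomputable def ptrProg (M : Matrix (Fin 2 × Fin 2) (Fin 2 × Fin 2) ℂ) :
    Matrix (Fin 2) (Fin 2) ℂ :=
  Matrix.of fun d d' => ∑ n : Fin 2, M (d, n) (d', n)

/-- `exp` of `(θ i) • A` for an involutive `A`. -/
lemma exp_smul_invol (A : Matrix (Fin 2 × Fin 2) (Fin 2 × Fin 2) ℂ) (hA : A * A = 1) (θ : ℝ) :
    NormedSpace.exp (((θ : ℂ) * I) • A) =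
      (Real.cos θ : ℂ) • (1 : Matrix (Fin 2 × Fin 2) (Fin 2 × Fin 2) ℂ) +
      ((Real.sin θ : ℂ) * I) • A := by
  have hA2 : A ^ 2 = 1 := by rw [sq, hA]
  rw [NormedSpace.exp_eq_tsum (𝕂 := ℂ)]
  refine HasSum.tsum_eq (HasSum.even_add_odd ?_ ?_)
  · have h := (Complex.hasSum_cos (θ : ℂ)).smul_const
      (1 : Matrix (Fin 2 × Fin 2) (Fin 2 × Fin 2) ℂ)
    rw [← Complex.ofReal_cos] at h
    convert h using 2 with k
    · rfl
    rw [smul_pow, pow_mul, pow_mul, hA2, one_pow, smul_smul]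
    congr 1
    rw [mul_pow, Complex.I_sq]
    ring
  · have h := ((Complex.hasSum_sin (θ : ℂ)).mul_right I).smul_const A
    rw [← Complex.ofReal_sin] at h
    convert h using 2 with k
    · rfl
    rw [smul_pow, pow_succ, pow_succ, pow_mul, pow_mul, hA2, one_pow, one_mul, smul_smul]
    congr 1
    rw [mul_pow, Complex.I_sq]
    ring

lemma pauliX_sq : pauliX * pauliX = 1 := by
  ext i j; fin_cases i <;> fin_cases j <;>
    simp [pauliX, Matrix.mul_apply, Fin.sum_univ_two, Matrix.one_apply]

lemma pauliY_sq : pauliY * pauliY = 1 := by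
  ext i j; fin_cases i <;> fin_cases j <;>
    simp [pauliY, Matrix.mul_apply, Fin.sum_univ_two, Matrix.one_apply]

lemma pauliZ_sq : pauliZ * pauliZ = 1 := by
  ext i j; fin_cases i <;> fin_cases j <;>
    simp [pauliZ, Matrix.mul_apply, Fin.sum_univ_two, Matrix.one_apply]

lemma kron_invol {P : Matrix (Fin 2) (Fin 2) ℂ} (hP : P * P = 1) :
    (P ⊗ₖ P) * (P ⊗ₖ P) = 1 := by
  rw [← Matrix.mul_kronecker_mul, hP, Matrix.one_kronecker_one]

set_option maxHeartbeats 2000000 in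
lemma key_product :
    ((1 : Matrix (Fin 2 × Fin 2) (Fin 2 × Fin 2) ℂ) + I • (pauliX ⊗ₖ pauliX)) *
    (1 + I • (pauliY ⊗ₖ pauliY)) * (1 + I • (pauliZ ⊗ₖ pauliZ)) =
      (2 + 2 * I) • swapMatrix := by
  ext ⟨i, j⟩ ⟨k, l⟩
  simp only [Matrix.mul_apply, Matrix.add_apply, Matrix.smul_apply, Matrix.one_apply,
    kroneckerMap_apply, Fintype.sum_prod_type, Fin.sum_univ_two, swapMatrix, E2,
    Matrix.single, Matrix.of_apply, smul_eq_mul, Prod.mk.injEq]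
  fin_cases i <;> fin_cases j <;> fin_cases k <;> fin_cases l <;>
    norm_num [pauliX, pauliY, pauliZ] <;> ring_nf <;> norm_num [Complex.I_sq] <;> ring

lemma swap_conjTranspose : swapMatrixᴴ = swapMatrix := by
  ext ⟨i, j⟩ ⟨k, l⟩
  simp only [Matrix.conjTranspose_apply, swapMatrix, E2, Matrix.single,
    Matrix.add_apply, Matrix.of_apply, Prod.mk.injEq]
  fin_cases i <;> fin_cases j <;> fin_cases k <;> fin_cases l <;> norm_num

lemma swap_conj (ρ ξ : Matrix (Fin 2) (Fin 2) ℂ) (d d' : Fin 2) :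
    ∑ n : Fin 2, (swapMatrix * (ρ ⊗ₖ ξ) * swapMatrix) (d, n) (d', n) = ρ.trace * ξ d d' := by
  simp only [Matrix.mul_apply, Fintype.sum_prod_type, Fin.sum_univ_two, swapMatrix, E2,
    Matrix.single, Matrix.add_apply, Matrix.of_apply, kroneckerMap_apply,
    Prod.mk.injEq, Matrix.trace_fin_two]
  fin_cases d <;> fin_cases d' <;> norm_num <;> ring

/-- `W(π/4,π/4,π/4) = e^{iπ/4}·SWAP`, hence used as a processor
it outputs the program state, exactly as the SWAP processor. -/
theorem Wgate_pi_div_four_eq_swap :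
    Wgate (Real.pi / 4) (Real.pi / 4) (Real.pi / 4) =
      Complex.exp (((Real.pi : ℂ) / 4) * I) • swapMatrix ∧
    ∀ ρ ξ : Matrix (Fin 2) (Fin 2) ℂ,
      ptrProg (Wgate (Real.pi / 4) (Real.pi / 4) (Real.pi / 4) * (ρ ⊗ₖ ξ) *
        (Wgate (Real.pi / 4) (Real.pi / 4) (Real.pi / 4))ᴴ) = ρ.trace • ξ := by
  have h2 : ((Real.sqrt 2 : ℝ) : ℂ) ^ 2 = 2 := by
    norm_cast
    exact Real.sq_sqrt (by norm_num)
  have hW : Wgate (Real.pi / 4) (Real.pi / 4) (Real.pi / 4) =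
      Complex.exp (((Real.pi : ℂ) / 4) * I) • swapMatrix := by
    rw [Wgate, exp_smul_invol _ (kron_invol pauliX_sq), exp_smul_invol _ (kron_invol pauliY_sq),
      exp_smul_invol _ (kron_invol pauliZ_sq), Real.cos_pi_div_four, Real.sin_pi_div_four]
    have hfac : ∀ M : Matrix (Fin 2 × Fin 2) (Fin 2 × Fin 2) ℂ,
        ((Real.sqrt 2 / 2 : ℝ) : ℂ) • (1 : Matrix (Fin 2 × Fin 2) (Fin 2 × Fin 2) ℂ) +
          (((Real.sqrt 2 / 2 : ℝ) : ℂ) * I) • M =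
        ((Real.sqrt 2 / 2 : ℝ) : ℂ) • (1 + I • M) := by
      intro M
      rw [smul_add, smul_smul]
    rw [hfac, hfac, hfac]
    simp only [smul_mul_assoc, Matrix.mul_smul, smul_smul]
    rw [key_product, smul_smul]
    have hexp : Complex.exp (((Real.pi : ℂ) / 4) * I) =
        ((Real.sqrt 2 / 2 : ℝ) : ℂ) + ((Real.sqrt 2 / 2 : ℝ) : ℂ) * I := by
      rw [Complex.exp_mul_I, show ((Real.pi : ℂ) / 4) = ((Real.pi / 4 : ℝ) : ℂ) by push_cast; ring,
        ← Complex.ofReal_cos, ← Complex.ofReal_sin, Real.cos_pi_div_four, Real.sin_pi_div_four]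
    rw [hexp]
    congr 1
    push_cast
    linear_combination ((2 + 2 * I) * ((Real.sqrt 2 : ℝ) : ℂ) / 8) * h2
  refine ⟨hW, fun ρ ξ => ?_⟩
  rw [hW, Matrix.conjTranspose_smul, swap_conjTranspose]
  have he : Complex.exp (((Real.pi : ℂ) / 4) * I) *
      star (Complex.exp (((Real.pi : ℂ) / 4) * I)) = 1 := by
    rw [mul_comm, Complex.star_def, ← Complex.exp_conj, ← Complex.exp_add]
    have hconj : (starRingEnd ℂ) (((Real.pi : ℂ) / 4) * I) = -(((Real.pi : ℂ) / 4) * I) := by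
      simp [_root_.map_mul, map_div₀, map_ofNat, Complex.conj_I, Complex.conj_ofReal]
    rw [hconj, neg_add_cancel, Complex.exp_zero]
  simp only [smul_mul_assoc, Matrix.mul_smul, smul_smul]
  rw [he, one_smul]
  ext d d'
  simp only [ptrProg, Matrix.of_apply, Matrix.smul_apply, smul_eq_mul]
  exact swap_conj ρ ξ d d'
end

section
/- Realization of a quantum instrument: let O_i (for i < s) be ℂ-linear completely positive maps from n×n complex matrices to m×m complex matrices (each Choi matrix C(O_i) positive semidefinite) such that the sum Σ_{i<s} O_i is trace preserving. Then there exist d ≥ 1, a completely positive trace-preserving linear map Φ from n×n complex matrices to matrices on ℂ^m ⊗ ℂ^d, and positive semidefinite d×d matrices P_i with Σ_{i<s} P_i = 1_d (a POVM), such that O_i(ρ) = Tr₂[Φ(ρ)·(1_m ⊗ P_i)] for every i < s and every n×n complex matrix ρ, where Tr₂ is the partial trace over the d-dimensional ancillary factor. -/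
open Matrix Kronecker
open scoped ComplexOrder

/-- The Choi matrix of a linear map `Φ` from `n×n` matrices to matrices indexed by `α`:
`C(Φ) = Σ_{i,j} Φ(E_{ij}) ⊗ E_{ij}`. -/
noncomputable def choiMatrix {α : Type*} [Fintype α] [DecidableEq α] (n : ℕ)
    (Φ : Matrix (Fin n) (Fin n) ℂ →ₗ[ℂ] Matrix α α ℂ) :
    Matrix (α × Fin n) (α × Fin n) ℂ :=
  ∑ i : Fin n, ∑ j : Fin n,
    (Φ (single i j (1 : ℂ))) ⊗ₖ single i j (1 : ℂ)

/-- Partial trace over the second (ancillary) tensor factor. -/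
noncomputable def trSnd (m d : ℕ)
    (M : Matrix (Fin m × Fin d) (Fin m × Fin d) ℂ) :
    Matrix (Fin m) (Fin m) ℂ :=
  Matrix.of fun p q => ∑ i : Fin d, M (p, i) (q, i)

lemma choiMatrix_apply {α : Type*} [Fintype α] [DecidableEq α] (n : ℕ)
    (Φ : Matrix (Fin n) (Fin n) ℂ →ₗ[ℂ] Matrix α α ℂ) (x y : α) (a b : Fin n) :
    choiMatrix n Φ (x, a) (y, b) = Φ (single a b 1) x y := by
  simp [choiMatrix, Matrix.sum_apply, kroneckerMap_apply, single, ite_and]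

lemma blockDiagonal_posSemidef {k n : Type*} [Fintype k] [DecidableEq k] [Fintype n]
    {M : k → Matrix n n ℂ} (h : ∀ i, (M i).PosSemidef) :
    (Matrix.blockDiagonal M).PosSemidef := by
  rw [posSemidef_iff_dotProduct_mulVec]
  constructor
  · rw [Matrix.IsHermitian, Matrix.blockDiagonal_conjTranspose]
    exact congrArg _ (funext fun i => (h i).1)
  · intro x
    have e : star x ⬝ᵥ (Matrix.blockDiagonal M) *ᵥ x
        = ∑ i : k, star (fun p => x (p, i)) ⬝ᵥ (M i) *ᵥ (fun p => x (p, i)) := by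
      simp only [dotProduct, mulVec, Fintype.sum_prod_type, Matrix.blockDiagonal_apply,
        ite_mul, zero_mul, Finset.sum_ite_eq, Finset.mem_univ, if_true, Pi.star_apply]
      rw [Finset.sum_comm]
    rw [e]
    exact Finset.sum_nonneg fun i _ => (h i).dotProduct_mulVec_nonneg _

/-- Realization of a quantum instrument: a family of completely
positive maps summing to a trace-preserving map arises from a single channel into a
larger space followed by a POVM measurement on the ancilla. -/
theorem instrument_realization (m n s : ℕ) (hs : 1 ≤ s)
    (O : Fin s → (Matrix (Fin n) (Fin n) ℂ →ₗ[ℂ] Matrix (Fin m) (Fin m) ℂ))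
    (hCP : ∀ i, (choiMatrix n (O i)).PosSemidef)
    (hTP : ∀ X : Matrix (Fin n) (Fin n) ℂ, (∑ i : Fin s, O i X).trace = X.trace) :
    ∃ d : ℕ, 1 ≤ d ∧
      ∃ Φ : Matrix (Fin n) (Fin n) ℂ →ₗ[ℂ] Matrix (Fin m × Fin d) (Fin m × Fin d) ℂ,
        (choiMatrix n Φ).PosSemidef ∧
        (∀ X : Matrix (Fin n) (Fin n) ℂ, (Φ X).trace = X.trace) ∧
        ∃ P : Fin s → Matrix (Fin d) (Fin d) ℂ,
          (∀ i, (P i).PosSemidef) ∧ (∑ i : Fin s, P i = 1) ∧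
          ∀ (i : Fin s) (ρ : Matrix (Fin n) (Fin n) ℂ),
            O i ρ = trSnd m d (Φ ρ * ((1 : Matrix (Fin m) (Fin m) ℂ) ⊗ₖ P i)) := by
  refine ⟨s, hs, ?_⟩
  set Φ : Matrix (Fin n) (Fin n) ℂ →ₗ[ℂ] Matrix (Fin m × Fin s) (Fin m × Fin s) ℂ :=
    { toFun := fun ρ => Matrix.of fun pk ql =>
        if pk.2 = ql.2 then O pk.2 ρ pk.1 ql.1 else 0
      map_add' := by
        intro ρ σ
        ext ⟨p, k⟩ ⟨q, l⟩
        by_cases h : k = l <;> simp [h]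
      map_smul' := by
        intro c ρ
        ext ⟨p, k⟩ ⟨q, l⟩
        by_cases h : k = l <;> simp [h] } with hΦ
  refine ⟨Φ, ?_, ?_, ?_⟩
  · have key : choiMatrix n Φ =
        (Matrix.blockDiagonal fun k => choiMatrix n (O k)).submatrix
          (fun x : (Fin m × Fin s) × Fin n => ((x.1.1, x.2), x.1.2))
          (fun x : (Fin m × Fin s) × Fin n => ((x.1.1, x.2), x.1.2)) := by
      ext ⟨⟨p, k⟩, a⟩ ⟨⟨q, l⟩, b⟩
      rw [choiMatrix_apply]
      by_cases h : k = l <;>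
        simp [hΦ, Matrix.submatrix_apply, Matrix.blockDiagonal_apply, h, choiMatrix_apply]
    rw [key]
    exact (blockDiagonal_posSemidef fun k => hCP k).submatrix _
  · intro X
    rw [← hTP X]
    simp only [Matrix.trace, Matrix.diag, Fintype.sum_prod_type, hΦ]
    rw [Finset.sum_comm]
    simp only [Matrix.sum_apply, if_true, eq_self_iff_true, of_apply, ite_true]
    rw [Finset.sum_comm]
    simp
  · refine ⟨fun i => single i i 1, fun i => ?_, ?_, ?_⟩
    · rw [posSemidef_iff_dotProduct_mulVec]
      constructor
      · ext a b
        simp [Matrix.conjTranspose_apply, single, and_comm]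
      · intro x
        have e : star x ⬝ᵥ (single i i (1 : ℂ)) *ᵥ x
            = (starRingEnd ℂ) (x i) * x i := by
          simp [dotProduct, mulVec, single, ite_and, mul_comm]
        rw [e]
        exact star_mul_self_nonneg (x i)
    · ext a b
      simp only [Matrix.sum_apply, single, Matrix.one_apply, of_apply, ite_and]
      by_cases h : a = b <;> simp [h]
    · intro i ρ
      ext p q
      simp only [trSnd, of_apply, Matrix.mul_apply, Fintype.sum_prod_type,
        kroneckerMap_apply, Matrix.one_apply, single, ite_and, mul_ite, mul_zero,
        mul_one, ite_mul, zero_mul, Finset.sum_ite_eq, Finset.sum_ite_eq',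
        Finset.mem_univ, if_true, hΦ]
      simp
end
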